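/- arXiv:2412.17886 — 2 statements merged into one kernel-verified Lean document; each statement's English description precedes it below -/
import Mathlib

section
/- The Green's function of the hyperbolic operator −Δ_{B²} − 1/4 on the Poincaré disc, given by G(x,y) = (1/(4π)) ∫_0^1 t^{−1/2}(1−t)^{−1/2}(sinh²(ρ(x,y)/2) + t)^{−1/2} dt, satisfies the upper bound G(x,y) ≤ −(1/(2π)) ln|x−y| + C for some universal constant C and all distinct x, y in the unit disc B_1. -/
/-!
Let `S = sinh²(ρ(x,y)/2)`. The formula for `|T_x y|` gives
`S = |x - y|² / ((1 - |x|²)(1 - |y|²)) ≥ |x - y|²`. Fix `0 < a ≤ S` and write `u = √t`,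
`v = √(1 - t)`, so that `u² + v² = 1`. The integrand `1 / (u v √(S + t))` then splits as
`u / (v √(S + t)) + v / (u √(S + t)) ≤ 1 / v + 1 / (u √(a + t))`. The first term integrates to `2`;
the second is at most `a^{-1/2} t^{-1/2}` on `(0, a)` and at most `t⁻¹` on `(a, 1)`, so its integral
is at most `2 - log a`. Taking `a = |x - y|² / 4 ≤ 1` gives `4π G ≤ 4 + log 4 - 2 log |x - y|`.
-/

open Metric MeasureTheory Real RealInnerProductSpace

noncomputable section

/-- The Möbius transformation `T_a` of the unit disc in `ℝ²`. -/
def mobius (a x : EuclideanSpace ℝ (Fin 2)) : EuclideanSpace ℝ (Fin 2) :=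
  (1 - 2 * ⟪x, a⟫ + ‖x‖ ^ 2 * ‖a‖ ^ 2)⁻¹ •
    (‖x - a‖ ^ 2 • a - (1 - ‖a‖ ^ 2) • (x - a))

/-- Hyperbolic distance from the origin in the Poincaré disc model. -/
def rhoDist (x : EuclideanSpace ℝ (Fin 2)) : ℝ :=
  Real.log ((1 + ‖x‖) / (1 - ‖x‖))

/-- The Green's function of `-Δ_{𝔹²} - 1/4` on the Poincaré disc. -/
def hypGreen (x y : EuclideanSpace ℝ (Fin 2)) : ℝ :=
  (1 / (4 * π)) * ∫ t in Set.Ioo (0 : ℝ) 1,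
    t ^ (-(1 / 2) : ℝ) * (1 - t) ^ (-(1 / 2) : ℝ) *
      (Real.sinh (rhoDist (mobius x y) / 2) ^ 2 + t) ^ (-(1 / 2) : ℝ)

theorem Real.sinh_sq_half_log {q : ℝ} (hq : 0 < q) :
    sinh (log q / 2) ^ 2 = (q - 1) ^ 2 / (4 * q) := by
  have hs : 0 < √q := sqrt_pos.2 hq
  have hsq : √q ^ 2 = q := sq_sqrt hq.le
  rw [← log_sqrt hq.le, sinh_log hs]
  generalize √q = s at hs hsq
  subst hsq
  field_simp
  ring

theorem sinh_sq_half_rhoDist {z : EuclideanSpace ℝ (Fin 2)} (hz : ‖z‖ < 1) :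
    sinh (rhoDist z / 2) ^ 2 = ‖z‖ ^ 2 / (1 - ‖z‖ ^ 2) := by
  have h₀ := norm_nonneg z
  have hm : 0 < 1 - ‖z‖ := by linarith
  have hm₂ : 0 < 1 - ‖z‖ ^ 2 := by nlinarith
  rw [rhoDist, sinh_sq_half_log (by positivity)]
  field_simp
  ring

theorem mobius_denom_eq (a x : EuclideanSpace ℝ (Fin 2)) :
    1 - 2 * ⟪x, a⟫ + ‖x‖ ^ 2 * ‖a‖ ^ 2 = (1 - ‖a‖ ^ 2) * (1 - ‖x‖ ^ 2) + ‖x - a‖ ^ 2 := by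
  rw [norm_sub_sq_real]
  ring

theorem norm_mobius_sq (a x : EuclideanSpace ℝ (Fin 2)) :
    ‖mobius a x‖ ^ 2 = ‖x - a‖ ^ 2 / ((1 - ‖a‖ ^ 2) * (1 - ‖x‖ ^ 2) + ‖x - a‖ ^ 2) := by
  have hv : ‖‖x - a‖ ^ 2 • a - (1 - ‖a‖ ^ 2) • (x - a)‖ ^ 2
      = ‖x - a‖ ^ 2 * ((1 - ‖a‖ ^ 2) * (1 - ‖x‖ ^ 2) + ‖x - a‖ ^ 2) := by
    rw [← real_inner_self_eq_norm_sq]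
    simp only [inner_sub_left, inner_sub_right, real_inner_smul_left, real_inner_smul_right]
    simp only [real_inner_self_eq_norm_sq, norm_sub_sq_real, real_inner_comm a x]
    ring
  rw [mobius, mobius_denom_eq, norm_smul, mul_pow, hv, norm_inv, norm_eq_abs, inv_pow, sq_abs]
  rcases eq_or_ne ((1 - ‖a‖ ^ 2) * (1 - ‖x‖ ^ 2) + ‖x - a‖ ^ 2) 0 with h | h
  · simp [h]
  · field_simp

theorem sinh_sq_half_rhoDist_mobius {a x : EuclideanSpace ℝ (Fin 2)}
    (ha : ‖a‖ < 1) (hx : ‖x‖ < 1) :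
    sinh (rhoDist (mobius a x) / 2) ^ 2 = ‖x - a‖ ^ 2 / ((1 - ‖a‖ ^ 2) * (1 - ‖x‖ ^ 2)) := by
  have hP : 0 < (1 - ‖a‖ ^ 2) * (1 - ‖x‖ ^ 2) :=
    mul_pos (sub_pos.2 (pow_lt_one₀ (norm_nonneg a) ha two_ne_zero))
      (sub_pos.2 (pow_lt_one₀ (norm_nonneg x) hx two_ne_zero))
  have hμ := norm_mobius_sq a x
  have hμ₁ : ‖mobius a x‖ < 1 := by
    rw [← sq_lt_one_iff₀ (norm_nonneg _), hμ, div_lt_one (by positivity)]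
    linarith
  rw [sinh_sq_half_rhoDist hμ₁, hμ]
  field_simp
  ring

theorem sq_norm_sub_le_sinh_sq_half_rhoDist_mobius {a x : EuclideanSpace ℝ (Fin 2)}
    (ha : ‖a‖ < 1) (hx : ‖x‖ < 1) :
    ‖x - a‖ ^ 2 ≤ sinh (rhoDist (mobius a x) / 2) ^ 2 := by
  have ha₂ : ‖a‖ ^ 2 < 1 := pow_lt_one₀ (norm_nonneg a) ha two_ne_zero
  have hx₂ : ‖x‖ ^ 2 < 1 := pow_lt_one₀ (norm_nonneg x) hx two_ne_zero
  rw [sinh_sq_half_rhoDist_mobius ha hx]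
  exact le_div_self (sq_nonneg _) (mul_pos (sub_pos.2 ha₂) (sub_pos.2 hx₂))
    (by nlinarith [sq_nonneg ‖a‖, sq_nonneg ‖x‖])

open intervalIntegral

theorem Real.rpow_neg_half_eq_inv_sqrt {x : ℝ} (hx : 0 ≤ x) : x ^ (-(1 / 2) : ℝ) = (√x)⁻¹ := by
  rw [rpow_neg hx, sqrt_eq_rpow]

def greenKernel (s t : ℝ) : ℝ :=
  t ^ (-(1 / 2) : ℝ) * (1 - t) ^ (-(1 / 2) : ℝ) * (s + t) ^ (-(1 / 2) : ℝ)

theorem greenKernel_le {a s t : ℝ} (ha : 0 < a) (has : a ≤ s) (ht₀ : 0 < t) (ht₁ : t < 1) :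
    greenKernel s t ≤ t ^ (-(1 / 2) : ℝ) * (a + t) ^ (-(1 / 2) : ℝ) + (1 - t) ^ (-(1 / 2) : ℝ) := by
  have h₁ : 0 < 1 - t := by linarith
  simp only [greenKernel, rpow_neg_half_eq_inv_sqrt, ht₀.le, h₁.le, ha.le, (ha.trans_le has).le,
    add_nonneg]
  have huv : √t ^ 2 + √(1 - t) ^ 2 = 1 := by rw [sq_sqrt ht₀.le, sq_sqrt h₁.le]; ring
  have hv₁ : √(1 - t) ≤ 1 := sqrt_le_one.2 (by linarith)
  have hw₀w : √(a + t) ≤ √(s + t) := sqrt_le_sqrt (by linarith)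
  have huw : √t ≤ √(s + t) := sqrt_le_sqrt (by linarith)
  have hu := sqrt_pos.2 ht₀
  have hv := sqrt_pos.2 h₁
  have hw₀ := sqrt_pos.2 (add_pos ha ht₀)
  generalize √t = u, √(1 - t) = v, √(s + t) = w, √(a + t) = w₀ at *
  have hw := hw₀.trans_le hw₀w
  calc u⁻¹ * v⁻¹ * w⁻¹ = u / (v * w) + v / (u * w) := by
        field_simp; linear_combination huv.symm
    _ ≤ 1 / v + 1 / (u * w₀) := by
      gcongr ?_ + ?_
      · rw [div_le_div_iff₀ (by positivity) hv]; nlinarith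
      · exact div_le_div₀ zero_le_one hv₁ (by positivity) (mul_le_mul_of_nonneg_left hw₀w hu.le)
    _ = u⁻¹ * w₀⁻¹ + v⁻¹ := by rw [one_div, one_div, mul_inv, add_comm]

theorem integral_rpow_neg_half (c : ℝ) :
    ∫ t in (0 : ℝ)..c, t ^ (-(1 / 2) : ℝ) = 2 * √c := by
  rw [integral_rpow (Or.inl (by norm_num)), zero_rpow (by norm_num), sqrt_eq_rpow]
  norm_num
  ring

theorem intervalIntegrable_one_sub_rpow_neg_half :
    IntervalIntegrable (fun t : ℝ => (1 - t) ^ (-(1 / 2) : ℝ)) volume 0 1 := by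
  have := (intervalIntegrable_rpow' (a := 0) (b := 1) (r := -(1 / 2)) (by norm_num)).comp_sub_left 1
  simpa using this.symm

theorem integral_one_sub_rpow_neg_half : ∫ t in (0 : ℝ)..1, (1 - t) ^ (-(1 / 2) : ℝ) = 2 := by
  rw [integral_comp_sub_left (fun t : ℝ => t ^ (-(1 / 2) : ℝ)), sub_self, sub_zero,
    integral_rpow_neg_half, sqrt_one, mul_one]

theorem rpow_neg_half_mul_add_rpow_neg_half_le_left {a t : ℝ} (ha : 0 < a) (ht : 0 ≤ t) :
    t ^ (-(1 / 2) : ℝ) * (a + t) ^ (-(1 / 2) : ℝ) ≤ a ^ (-(1 / 2) : ℝ) * t ^ (-(1 / 2) : ℝ) := by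
  rw [mul_comm]
  exact mul_le_mul_of_nonneg_right (rpow_le_rpow_of_nonpos ha (by linarith) (by norm_num))
    (rpow_nonneg ht _)

theorem rpow_neg_half_mul_add_rpow_neg_half_le_inv {a t : ℝ} (ha : 0 ≤ a) (ht : 0 < t) :
    t ^ (-(1 / 2) : ℝ) * (a + t) ^ (-(1 / 2) : ℝ) ≤ t⁻¹ := calc
  _ ≤ t ^ (-(1 / 2) : ℝ) * t ^ (-(1 / 2) : ℝ) :=
    mul_le_mul_of_nonneg_left (rpow_le_rpow_of_nonpos ht (by linarith) (by norm_num))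
      (rpow_nonneg ht.le _)
  _ = t⁻¹ := by rw [← rpow_add ht, ← rpow_neg_one]; norm_num

theorem intervalIntegrable_rpow_neg_half_mul_add_rpow_neg_half {a : ℝ} (ha : 0 < a) :
    IntervalIntegrable (fun t : ℝ => t ^ (-(1 / 2) : ℝ) * (a + t) ^ (-(1 / 2) : ℝ)) volume 0 1 := by
  refine ((intervalIntegrable_rpow' (a := 0) (b := 1) (r := -(1 / 2)) (by norm_num)).const_mul
    (a ^ (-(1 / 2) : ℝ))).mono_fun' (by fun_prop) ?_
  filter_upwards [ae_restrict_mem measurableSet_uIoc] with t ht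
  rw [Set.uIoc_of_le zero_le_one] at ht
  rw [norm_of_nonneg (mul_nonneg (rpow_nonneg ht.1.le _) (rpow_nonneg (by linarith [ht.1]) _))]
  exact rpow_neg_half_mul_add_rpow_neg_half_le_left ha ht.1.le

theorem integral_rpow_neg_half_mul_add_rpow_neg_half_le {a : ℝ} (ha : 0 < a) (ha₁ : a ≤ 1) :
    ∫ t in (0 : ℝ)..1, t ^ (-(1 / 2) : ℝ) * (a + t) ^ (-(1 / 2) : ℝ) ≤ 2 - log a := by
  have hint := intervalIntegrable_rpow_neg_half_mul_add_rpow_neg_half ha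
  have ha_mem : a ∈ Set.uIcc 0 1 := Set.mem_uIcc_of_le ha.le ha₁
  have hint₀ : IntervalIntegrable _ volume 0 a :=
    hint.mono_set (Set.uIcc_subset_uIcc Set.left_mem_uIcc ha_mem)
  have hint₁ : IntervalIntegrable _ volume a 1 :=
    hint.mono_set (Set.uIcc_subset_uIcc ha_mem Set.right_mem_uIcc)
  have hpos : ∀ t ∈ Set.uIcc a 1, 0 < t := fun t ht => ha.trans_le (Set.uIcc_of_le ha₁ ▸ ht).1
  have hnear : ∫ t in (0 : ℝ)..a, t ^ (-(1 / 2) : ℝ) * (a + t) ^ (-(1 / 2) : ℝ) ≤ 2 := calc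
    _ ≤ ∫ t in (0 : ℝ)..a, a ^ (-(1 / 2) : ℝ) * t ^ (-(1 / 2) : ℝ) :=
      integral_mono_on_of_le_Ioo ha.le hint₀ ((intervalIntegrable_rpow' (by norm_num)).const_mul _)
        fun t ht => rpow_neg_half_mul_add_rpow_neg_half_le_left ha ht.1.le
    _ = 2 := by
      rw [intervalIntegral.integral_const_mul, integral_rpow_neg_half,
        rpow_neg_half_eq_inv_sqrt ha.le]
      field_simp [(sqrt_pos.2 ha).ne']
  have hfar : ∫ t in a..1, t ^ (-(1 / 2) : ℝ) * (a + t) ^ (-(1 / 2) : ℝ) ≤ -log a := calc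
    _ ≤ ∫ t in a..1, t⁻¹ :=
      integral_mono_on_of_le_Ioo ha₁ hint₁
        (intervalIntegrable_inv (fun t ht => (hpos t ht).ne') continuousOn_id)
        fun t ht => rpow_neg_half_mul_add_rpow_neg_half_le_inv ha.le (ha.trans ht.1)
    _ = -log a := by
      rw [integral_inv fun h => (hpos 0 h).false, one_div, log_inv]
  rw [← integral_add_adjacent_intervals hint₀ hint₁]
  linarith

theorem integral_greenKernel_le {a s : ℝ} (ha : 0 < a) (ha₁ : a ≤ 1) (has : a ≤ s) :
    ∫ t in Set.Ioo (0 : ℝ) 1, greenKernel s t ≤ 4 - log a := by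
  have hg := (intervalIntegrable_rpow_neg_half_mul_add_rpow_neg_half ha).1.mono_set
    Set.Ioo_subset_Ioc_self
  have hh := intervalIntegrable_one_sub_rpow_neg_half.1.mono_set Set.Ioo_subset_Ioc_self
  have hle : ∀ t ∈ Set.Ioo (0 : ℝ) 1, greenKernel s t ≤
      t ^ (-(1 / 2) : ℝ) * (a + t) ^ (-(1 / 2) : ℝ) + (1 - t) ^ (-(1 / 2) : ℝ) :=
    fun t ht => greenKernel_le ha has ht.1 ht.2
  have hk : IntegrableOn (greenKernel s) (Set.Ioo 0 1) := by
    refine (hg.add hh).mono' (by unfold greenKernel; fun_prop) ?_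
    filter_upwards [ae_restrict_mem measurableSet_Ioo] with t ht
    have hk₀ : 0 ≤ greenKernel s t :=
      mul_nonneg (mul_nonneg (rpow_nonneg ht.1.le _) (rpow_nonneg (sub_nonneg.2 ht.2.le) _))
        (rpow_nonneg (by linarith [ht.1, ha.trans_le has]) _)
    exact (norm_of_nonneg hk₀).trans_le (hle t ht)
  calc ∫ t in Set.Ioo (0 : ℝ) 1, greenKernel s t
      ≤ ∫ t in Set.Ioo (0 : ℝ) 1,
          (t ^ (-(1 / 2) : ℝ) * (a + t) ^ (-(1 / 2) : ℝ) + (1 - t) ^ (-(1 / 2) : ℝ)) :=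
        setIntegral_mono_on hk (hg.add hh) measurableSet_Ioo hle
    _ = (∫ t in (0 : ℝ)..1, t ^ (-(1 / 2) : ℝ) * (a + t) ^ (-(1 / 2) : ℝ)) +
          ∫ t in (0 : ℝ)..1, (1 - t) ^ (-(1 / 2) : ℝ) := by
        rw [integral_add hg hh, integral_of_le zero_le_one, integral_of_le zero_le_one,
          integral_Ioc_eq_integral_Ioo, integral_Ioc_eq_integral_Ioo]
    _ ≤ 2 - log a + 2 := add_le_add (integral_rpow_neg_half_mul_add_rpow_neg_half_le ha ha₁)
        integral_one_sub_rpow_neg_half.le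
    _ = 4 - log a := by ring

/-- Logarithmic upper bound for the Green's function: `G(x,y) ≤ -(1/(2π)) ln|x-y| + C`. -/
theorem hypGreen_log_upper_bound :
    ∃ C : ℝ, ∀ x ∈ ball (0 : EuclideanSpace ℝ (Fin 2)) 1,
      ∀ y ∈ ball (0 : EuclideanSpace ℝ (Fin 2)) 1, x ≠ y →
        hypGreen x y ≤ -(1 / (2 * π)) * Real.log ‖x - y‖ + C := by
  refine ⟨(4 + log 4) / (4 * π), fun x hx y hy hxy => ?_⟩
  rw [mem_ball_zero_iff] at hx hy
  have hd : 0 < ‖x - y‖ := norm_sub_pos_iff.2 hxy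
  have hd₂ : ‖x - y‖ < 2 := (norm_sub_le x y).trans_lt (by linarith)
  have hS : ‖x - y‖ ^ 2 ≤ sinh (rhoDist (mobius x y) / 2) ^ 2 := by
    rw [norm_sub_rev]; exact sq_norm_sub_le_sinh_sq_half_rhoDist_mobius hx hy
  calc hypGreen x y = 1 / (4 * π) * ∫ t in Set.Ioo (0 : ℝ) 1,
        greenKernel (sinh (rhoDist (mobius x y) / 2) ^ 2) t := rfl
    _ ≤ 1 / (4 * π) * (4 - log (‖x - y‖ ^ 2 / 4)) := by
      gcongr
      exact integral_greenKernel_le (by positivity) (by nlinarith) (by linarith [sq_nonneg ‖x - y‖])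
    _ = -(1 / (2 * π)) * log ‖x - y‖ + (4 + log 4) / (4 * π) := by
      rw [log_div (by positivity) (by norm_num), log_pow]
      field_simp
      ring

end
end

section
/- Let v ∈ C²(R²) be a bounded radial solution of −Δv = 8e^{η₀} v on R², where η₀(x) = −2 ln(1+|x|²), with ∫_{R²}|∇v|² dx < ∞. Then there exists α₀ ∈ R such that v(x) = α₀ (1−|x|²)/(1+|x|²) for all x ∈ R². -/
/-!
For radial `v = g(|x|)` the equation becomes `g'' + g'/r + 8 g/(1+r²)² = 0` for `r > 0`, and
evenness of `g` gives `g'(0) = 0`. The dilation mode `W = (1-r²)/(1+r²)` solves the same ODE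
with `W(0) = 1`, `W'(0) = 0`, so `h = g - g(0) W` solves it with zero data at the origin. The
energy `h² + h'²` then grows at most exponentially, since the singular term `-2h'²/r` of its
derivative has a sign, and Grönwall's inequality forces `h = 0`.
-/

open MeasureTheory

noncomputable section

/-- The Euclidean Laplacian on `ℝ²`, as the sum of second partial derivatives. -/
def lap (f : EuclideanSpace ℝ (Fin 2) → ℝ) (x : EuclideanSpace ℝ (Fin 2)) : ℝ :=
  ∑ i : Fin 2,
    fderiv ℝ (fun y => fderiv ℝ f y (EuclideanSpace.single i 1)) x (EuclideanSpace.single i 1)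

section LineDerivatives

variable {E F : Type*} [NormedAddCommGroup E] [NormedSpace ℝ E]
  [NormedAddCommGroup F] [NormedSpace ℝ F]

theorem deriv_comp_add_smul {f : E → F} (hf : Differentiable ℝ f) (x u : E) (s : ℝ) :
    deriv (fun t : ℝ => f (x + t • u)) s = fderiv ℝ f (x + s • u) u := by
  have hline : HasDerivAt (fun t : ℝ => x + t • u) u s := by
    simpa using ((hasDerivAt_id s).smul_const u).const_add x
  exact ((hf _).hasFDerivAt.comp_hasDerivAt s hline).deriv

theorem fderiv_fderiv_apply_eq_deriv_deriv {f : E → F} (hf : ContDiff ℝ 2 f) (x u : E) :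
    fderiv ℝ (fun y => fderiv ℝ f y u) x u = deriv (deriv fun t : ℝ => f (x + t • u)) 0 := by
  have hdf : Differentiable ℝ fun y => fderiv ℝ f y u :=
    ((hf.fderiv_right (m := 1) le_rfl).differentiable one_ne_zero).clm_apply
      (differentiable_const u)
  rw [funext (deriv_comp_add_smul (hf.differentiable two_ne_zero) x u),
    deriv_comp_add_smul hdf, zero_smul, add_zero]

end LineDerivatives

theorem deriv_deriv_comp_sqrt_sq_add_sq {g : ℝ → ℝ} (hg : ContDiff ℝ 2 g) {r : ℝ} (hr : 0 < r) :
    deriv (deriv fun t => g √(r ^ 2 + t ^ 2)) 0 = deriv g r / r := by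
  set ρ : ℝ → ℝ := fun t => √(r ^ 2 + t ^ 2)
  have hρ : ∀ s, HasDerivAt ρ (s / ρ s) s := by
    intro s
    have hq : HasDerivAt (fun t : ℝ => r ^ 2 + t ^ 2) (2 * s) s := by
      simpa using (hasDerivAt_pow 2 s).const_add (r ^ 2)
    refine ((Real.hasDerivAt_sqrt (by positivity)).comp s hq).congr_deriv ?_
    have : ρ s ≠ 0 := by positivity
    field_simp
    rfl
  have hρ0 : ρ 0 = r := by simp [ρ, Real.sqrt_sq hr.le]
  have hdg : ∀ s, deriv (g ∘ ρ) s = deriv g (ρ s) * (s / ρ s) := fun s =>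
    ((hg.differentiable two_ne_zero _).hasDerivAt.comp s (hρ s)).deriv
  have hA : HasDerivAt (fun s => deriv g (ρ s)) (deriv (deriv g) (ρ 0) * (0 / ρ 0)) 0 :=
    (hg.differentiable_deriv_two _).hasDerivAt.comp 0 (hρ 0)
  have hB : HasDerivAt (fun s => s / ρ s) ((1 * ρ 0 - 0 * (0 / ρ 0)) / ρ 0 ^ 2) 0 :=
    (hasDerivAt_id 0).div (hρ 0) (by rw [hρ0]; exact hr.ne')
  change deriv (deriv (g ∘ ρ)) 0 = _
  rw [funext hdg, (hA.fun_mul hB).deriv, hρ0]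
  field_simp
  ring

theorem Real.exp_neg_two_mul_log {x : ℝ} (hx : 0 < x) : Real.exp (-2 * Real.log x) = (x ^ 2)⁻¹ := by
  rw [neg_mul, Real.exp_neg, ← Nat.cast_ofNat, ← Real.log_pow, Real.exp_log (by positivity)]

theorem energy_deriv_le {a b r V K : ℝ} (hr : 0 < r) (hV : |V| ≤ K) :
    2 * a * b + 2 * b * (-(b / r) - V * a) ≤ (1 + K) * (a ^ 2 + b ^ 2) := by
  have hdamp : 0 ≤ b ^ 2 / r := by positivity
  have hab : 2 * |a| * |b| ≤ a ^ 2 + b ^ 2 := by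
    simpa only [sq_abs] using two_mul_le_add_sq |a| |b|
  have hpot : -(2 * V * a * b) ≤ K * (a ^ 2 + b ^ 2) :=
    calc -(2 * V * a * b) ≤ |2 * V * a * b| := neg_le_abs _
      _ = |V| * (2 * |a| * |b|) := by simp only [abs_mul, abs_two]; ring
      _ ≤ K * (a ^ 2 + b ^ 2) := mul_le_mul hV hab (by positivity) ((abs_nonneg V).trans hV)
  have : 2 * b * (-(b / r) - V * a) = -2 * (b ^ 2 / r) - 2 * V * a * b := by ring
  linarith [two_mul_le_add_sq a b]

theorem eq_zero_of_radial_ode {h h' h'' V : ℝ → ℝ} {K : ℝ}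
    (hh : ∀ r, HasDerivAt h (h' r) r) (hh' : ∀ r, HasDerivAt h' (h'' r) r)
    (hode : ∀ r > 0, h'' r = -(h' r / r) - V r * h r) (hV : ∀ r > 0, |V r| ≤ K)
    (h₀ : h 0 = 0) (h₀' : h' 0 = 0) {r : ℝ} (hr : 0 ≤ r) : h r = 0 := by
  set E : ℝ → ℝ := fun s => h s ^ 2 + h' s ^ 2
  have hE : ∀ s, HasDerivAt E (2 * h s * h' s + 2 * h' s * h'' s) s := by
    intro s
    refine (((hh s).fun_pow 2).fun_add ((hh' s).fun_pow 2)).congr_deriv ?_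
    norm_num
  have hbound : ∀ s ≥ 0, 2 * h s * h' s + 2 * h' s * h'' s ≤ (1 + K) * E s + 0 := by
    intro s hs
    rcases hs.eq_or_lt with rfl | hs
    · simp [E, h₀, h₀']
    · rw [hode s hs, add_zero]
      exact energy_deriv_le hs (hV s hs)
  have hEr : E r ≤ 0 := by
    simpa [gronwallBound_ε0_δ0] using le_gronwallBound_of_liminf_deriv_right_le
      (fun s _ => (hE s).continuousAt.continuousWithinAt)
      (fun s _ _ hlt => (hE s).hasDerivWithinAt.liminf_right_slope_le hlt)
      (by simp [E, h₀, h₀'] : E 0 ≤ 0) (fun s hs => hbound s hs.1) r ⟨hr, le_rfl⟩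
  have : h r ^ 2 = 0 := le_antisymm (by nlinarith [sq_nonneg (h' r)]) (sq_nonneg _)
  exact pow_eq_zero_iff two_ne_zero |>.mp this

/-- Half of `∂_λ` at `λ = 1` of the Liouville solutions `η₀(λx) + 2 log λ`, which is why it solves
the linearized equation. -/
def dilationMode (r : ℝ) : ℝ := (1 - r ^ 2) / (1 + r ^ 2)

theorem hasDerivAt_dilationMode (r : ℝ) :
    HasDerivAt dilationMode (-4 * r / (1 + r ^ 2) ^ 2) r := by
  refine (((hasDerivAt_const r 1).fun_sub (hasDerivAt_pow 2 r)).fun_div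
    ((hasDerivAt_const r 1).fun_add (hasDerivAt_pow 2 r)) (by positivity)).congr_deriv ?_
  field_simp
  ring

theorem deriv_dilationMode : deriv dilationMode = fun r => -4 * r / (1 + r ^ 2) ^ 2 :=
  funext fun r => (hasDerivAt_dilationMode r).deriv

theorem hasDerivAt_deriv_dilationMode (r : ℝ) :
    HasDerivAt (deriv dilationMode) ((12 * r ^ 2 - 4) / (1 + r ^ 2) ^ 3) r := by
  have hden : HasDerivAt (fun t : ℝ => (1 + t ^ 2) ^ 2) (2 * (1 + r ^ 2) * (2 * r)) r := by
    simpa using ((hasDerivAt_pow 2 r).const_add 1).fun_pow 2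
  rw [deriv_dilationMode]
  refine (((hasDerivAt_id r).const_mul (-4)).fun_div hden (by positivity)).congr_deriv ?_
  simp only [id]
  field_simp
  ring

theorem dilationMode_ode {r : ℝ} (hr : r ≠ 0) :
    deriv (deriv dilationMode) r
      = -(deriv dilationMode r / r) - 8 / (1 + r ^ 2) ^ 2 * dilationMode r := by
  rw [(hasDerivAt_deriv_dilationMode r).deriv, deriv_dilationMode, dilationMode]
  field_simp
  ring

section Radial

local notation "ℝ²" => EuclideanSpace ℝ (Fin 2)

def radialProfile (v : ℝ² → ℝ) (r : ℝ) : ℝ := v (r • EuclideanSpace.single 0 1)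

variable {v : ℝ² → ℝ}

theorem norm_smul_single_zero_add_smul_single_one (r t : ℝ) :
    ‖r • EuclideanSpace.single (0 : Fin 2) (1 : ℝ) + t • EuclideanSpace.single 1 1‖
      = √(r ^ 2 + t ^ 2) := by
  rw [EuclideanSpace.norm_eq]
  simp [Fin.sum_univ_two, sq_abs]

theorem radialProfile_norm (hrad : ∀ x y : ℝ², ‖x‖ = ‖y‖ → v x = v y) (x : ℝ²) :
    radialProfile v ‖x‖ = v x :=
  hrad _ _ (by simp [norm_smul])

theorem deriv_radialProfile_zero (hrad : ∀ x y : ℝ², ‖x‖ = ‖y‖ → v x = v y) :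
    deriv (radialProfile v) 0 = 0 := by
  have heven : (fun r => radialProfile v (-r)) = radialProfile v :=
    funext fun r => hrad _ _ (by simp [norm_smul])
  have := deriv_comp_neg (f := radialProfile v) (x := 0)
  rw [heven, neg_zero] at this
  linarith

theorem ContDiff.radialProfile {n : WithTop ℕ∞} (hv : ContDiff ℝ n v) :
    ContDiff ℝ n (radialProfile v) :=
  hv.comp (contDiff_id.smul contDiff_const)

theorem lap_smul_single_zero_of_radial (hv : ContDiff ℝ 2 v)
    (hrad : ∀ x y : ℝ², ‖x‖ = ‖y‖ → v x = v y) {r : ℝ} (hr : 0 < r) :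
    lap v (r • EuclideanSpace.single 0 1)
      = deriv (deriv (radialProfile v)) r + deriv (radialProfile v) r / r := by
  have hradial : (fun t => v (r • EuclideanSpace.single 0 1 + t • EuclideanSpace.single 0 1))
      = fun t => radialProfile v (r + t) := by
    simp only [radialProfile, add_smul]
  have htangential :
      (fun t => v (r • EuclideanSpace.single 0 1 + t • EuclideanSpace.single 1 1))
        = fun t => radialProfile v √(r ^ 2 + t ^ 2) := by
    funext t
    rw [← norm_smul_single_zero_add_smul_single_one, radialProfile_norm hrad]
  rw [lap, Fin.sum_univ_two, fderiv_fderiv_apply_eq_deriv_deriv hv,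
    fderiv_fderiv_apply_eq_deriv_deriv hv, hradial, htangential,
    deriv_deriv_comp_sqrt_sq_add_sq hv.radialProfile hr, funext fun s => deriv_comp_const_add (radialProfile v) r s, deriv_comp_const_add, add_zero]

theorem radialProfile_ode (hv : ContDiff ℝ 2 v) (hrad : ∀ x y : ℝ², ‖x‖ = ‖y‖ → v x = v y)
    (heq : ∀ x : ℝ², -lap v x = 8 * Real.exp (-2 * Real.log (1 + ‖x‖ ^ 2)) * v x)
    {r : ℝ} (hr : 0 < r) :
    deriv (deriv (radialProfile v)) r
      = -(deriv (radialProfile v) r / r) - 8 / (1 + r ^ 2) ^ 2 * radialProfile v r := by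
  have := heq (r • EuclideanSpace.single 0 1)
  rw [lap_smul_single_zero_of_radial hv hrad hr, norm_smul, PiLp.norm_single,
    Real.norm_of_nonneg hr.le, norm_one, mul_one,
    Real.exp_neg_two_mul_log (by positivity)] at this
  rw [radialProfile, div_eq_mul_inv 8]
  linarith

end Radial

theorem radial_linearized_liouville_classification_general
    (v : EuclideanSpace ℝ (Fin 2) → ℝ)
    (hv : ContDiff ℝ 2 v)
    (hrad : ∀ x y : EuclideanSpace ℝ (Fin 2), ‖x‖ = ‖y‖ → v x = v y)
    (heq : ∀ x : EuclideanSpace ℝ (Fin 2),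
      -lap v x = 8 * Real.exp (-2 * Real.log (1 + ‖x‖ ^ 2)) * v x) :
    ∃ α₀ : ℝ, ∀ x : EuclideanSpace ℝ (Fin 2),
      v x = α₀ * ((1 - ‖x‖ ^ 2) / (1 + ‖x‖ ^ 2)) := by
  let g := radialProfile v
  have hg : ContDiff ℝ 2 g := hv.radialProfile
  refine ⟨g 0, fun x => ?_⟩
  rw [← radialProfile_norm hrad x, ← dilationMode, ← sub_eq_zero]
  refine eq_zero_of_radial_ode (V := fun r => 8 / (1 + r ^ 2) ^ 2) (K := 8)
    (h' := fun r => deriv g r - g 0 * deriv dilationMode r)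
    (h'' := fun r => deriv (deriv g) r - g 0 * deriv (deriv dilationMode) r)
    (fun r => (hg.differentiable two_ne_zero r).hasDerivAt.fun_sub
      ((hasDerivAt_dilationMode r).differentiableAt.hasDerivAt.const_mul _))
    (fun r => (hg.differentiable_deriv_two r).hasDerivAt.fun_sub
      ((hasDerivAt_deriv_dilationMode r).differentiableAt.hasDerivAt.const_mul _))
    (fun r hr => ?_) (fun r _ => ?_) (by simp [dilationMode])
    (by simp [g, deriv_radialProfile_zero hrad, deriv_dilationMode]) (norm_nonneg x)
  · rw [radialProfile_ode hv hrad heq hr, dilationMode_ode hr.ne']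
    ring
  · rw [abs_of_pos (by positivity), div_le_iff₀ (by positivity)]
    nlinarith [sq_nonneg r]

/-- Classification of bounded radial finite-energy solutions of the linearized
Liouville equation `-Δv = 8 e^{η₀} v` on `ℝ²`: they are multiples of `(1-|x|²)/(1+|x|²)`. -/
theorem radial_linearized_liouville_classification
    (v : EuclideanSpace ℝ (Fin 2) → ℝ)
    (hv : ContDiff ℝ 2 v)
    (hbdd : ∃ M : ℝ, ∀ x, |v x| ≤ M)
    (hrad : ∀ x y : EuclideanSpace ℝ (Fin 2), ‖x‖ = ‖y‖ → v x = v y)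
    (heq : ∀ x : EuclideanSpace ℝ (Fin 2),
      -lap v x = 8 * Real.exp (-2 * Real.log (1 + ‖x‖ ^ 2)) * v x)
    (henergy : Integrable (fun x : EuclideanSpace ℝ (Fin 2) => ‖gradient v x‖ ^ 2)) :
    ∃ α₀ : ℝ, ∀ x : EuclideanSpace ℝ (Fin 2),
      v x = α₀ * ((1 - ‖x‖ ^ 2) / (1 + ‖x‖ ^ 2)) :=
  radial_linearized_liouville_classification_general v hv hrad heq

end
end
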